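/- arXiv:2410.08298 — 2 statements merged into one kernel-verified Lean document; each statement's English description precedes it below -/
import Mathlib

section
/- (Theorem 1 of the paper.) Consider δx_{k+1} = A δx_k + B_p p_k + B_w w_k where p_k satisfies the quadratic constraint [δx_k; p_k]ᵀ M [δx_k; p_k] ≥ 0 almost surely, w_k is zero-mean with covariance Q and uncorrelated with δx_k and p_k. If there exist symmetric Z, Y ∈ S^n and ξ ≥ 0 with Z − Y ⪯ 0 and [[Aᵀ(Z−Y)A, AᵀZB_p],[B_pᵀZA, B_pᵀZB_p]] + ξ M ⪯ 0, then tr(P⁻_{k+1} Z) ≤ tr(B_w Q B_wᵀ Z) + tr(A P⁺_k Aᵀ Y), where P⁻_{k+1} = 𝔼[δx_{k+1} δx_{k+1}ᵀ] and P⁺_k = 𝔼[δx_k δx_kᵀ]. -/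
open Matrix MeasureTheory

def Matrix.NegSemidef' {k : Type*} [Fintype k] (N : Matrix k k ℝ) : Prop :=
  (-N).PosSemidef

/-- Uncentered second-moment (cross-moment) matrix `𝔼[x yᵀ]`. -/
noncomputable def secondMoment {Ω : Type*} [MeasureSpace Ω] {n m : ℕ}
    (x : Ω → Fin n → ℝ) (y : Ω → Fin m → ℝ) : Matrix (Fin n) (Fin m) ℝ :=
  Matrix.of fun i j => ∫ ω, x ω i * y ω j

/-!
Write `δx' = F v` with `v = (δx, p, w)` and `F = [A Bp Bw]`. Because `w` is uncorrelated with
`s = (δx, p)`, the second moment of `δx'` splits as `G 𝔼[s sᵀ] Gᵀ + Bw Q Bwᵀ` with `G = [A Bp]`, so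
`tr(P⁻ Z) = 𝔼[(G s)ᵀ Z (G s)] + tr(Bw Q Bwᵀ Z)`. Evaluating the LMI at `s` and using the quadratic
constraint to discard the `ξ M` term (S-procedure) gives `(G s)ᵀ Z (G s) ≤ (A δx)ᵀ Y (A δx)`
almost surely, whose expectation is `tr(A P⁺ Aᵀ Y)`.
-/

theorem Matrix.dotProduct_mulVec_eq_sum {ι κ : Type*} [Fintype ι] [Fintype κ]
    (N : Matrix κ ι ℝ) (u : ι → ℝ) (v : κ → ℝ) :
    v ⬝ᵥ (N *ᵥ u) = ∑ i, ∑ j, N j i * (u i * v j) := by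
  simp only [dotProduct, Matrix.mulVec, Finset.mul_sum]
  rw [Finset.sum_comm]
  exact Finset.sum_congr rfl fun i _ => Finset.sum_congr rfl fun j _ => by ring

section Moments

variable {Ω ι κ : Type*} [MeasureSpace Ω]

/-- `secondMoment` over arbitrary finite index types, so that it applies to block vectors
such as `Sum.elim δx p`. -/
noncomputable def crossMoment (x : Ω → ι → ℝ) (y : Ω → κ → ℝ) : Matrix ι κ ℝ :=
  Matrix.of fun i j => ∫ ω, x ω i * y ω j

def MomentIntegrable (x : Ω → ι → ℝ) (y : Ω → κ → ℝ) : Prop :=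
  ∀ i j, Integrable fun ω => x ω i * y ω j

theorem secondMoment_eq_crossMoment {n m : ℕ} (x : Ω → Fin n → ℝ) (y : Ω → Fin m → ℝ) :
    secondMoment x y = crossMoment x y :=
  rfl

theorem crossMoment_transpose (x : Ω → ι → ℝ) (y : Ω → κ → ℝ) :
    (crossMoment x y)ᵀ = crossMoment y x := by
  ext i j
  simp only [crossMoment, transpose_apply, of_apply, mul_comm]

theorem crossMoment_sumElim {ι' κ' : Type*} (a : Ω → ι → ℝ) (b : Ω → ι' → ℝ)
    (c : Ω → κ → ℝ) (d : Ω → κ' → ℝ) :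
    crossMoment (fun ω => Sum.elim (a ω) (b ω)) (fun ω => Sum.elim (c ω) (d ω)) =
      fromBlocks (crossMoment a c) (crossMoment a d) (crossMoment b c) (crossMoment b d) := by
  ext (i | i) (j | j) <;> rfl

namespace MomentIntegrable

variable {x : Ω → ι → ℝ} {y : Ω → κ → ℝ}

theorem symm (h : MomentIntegrable x y) : MomentIntegrable y x := fun i j => by
  simpa only [mul_comm] using h j i

theorem sumElim_left {ι' : Type*} {a : Ω → ι' → ℝ} (hx : MomentIntegrable x y)
    (ha : MomentIntegrable a y) : MomentIntegrable (fun ω => Sum.elim (x ω) (a ω)) y := by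
  rintro (i | i) j
  exacts [hx i j, ha i j]

theorem sumElim_right {κ' : Type*} {b : Ω → κ' → ℝ} (hy : MomentIntegrable x y)
    (hb : MomentIntegrable x b) : MomentIntegrable x (fun ω => Sum.elim (y ω) (b ω)) := by
  rintro i (j | j)
  exacts [hy i j, hb i j]

variable [Fintype ι] [Fintype κ]

theorem integrable_bilinear (h : MomentIntegrable x y) (c : ι → κ → ℝ) :
    Integrable fun ω => ∑ i, ∑ j, c i j * (x ω i * y ω j) :=
  integrable_finsetSum _ fun i _ => integrable_finsetSum _ fun j _ => (h i j).const_mul _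

theorem integral_bilinear (h : MomentIntegrable x y) (c : ι → κ → ℝ) :
    ∫ ω, ∑ i, ∑ j, c i j * (x ω i * y ω j) = ∑ i, ∑ j, c i j * crossMoment x y i j := by
  rw [integral_finsetSum _ fun i _ => integrable_finsetSum _ fun j _ => (h i j).const_mul _]
  refine Finset.sum_congr rfl fun i _ => ?_
  rw [integral_finsetSum _ fun j _ => (h i j).const_mul _]
  exact Finset.sum_congr rfl fun j _ => integral_const_mul _ _

theorem integrable_dotProduct_mulVec (h : MomentIntegrable x y) (N : Matrix κ ι ℝ) :
    Integrable fun ω => y ω ⬝ᵥ (N *ᵥ x ω) := by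
  simpa only [dotProduct_mulVec_eq_sum] using h.integrable_bilinear fun i j => N j i

theorem integral_dotProduct_mulVec (h : MomentIntegrable x y) (N : Matrix κ ι ℝ) :
    ∫ ω, y ω ⬝ᵥ (N *ᵥ x ω) = (crossMoment x y * N).trace := by
  simp_rw [dotProduct_mulVec_eq_sum, h.integral_bilinear]
  simp only [Matrix.trace, Matrix.diag, Matrix.mul_apply, mul_comm (N _ _)]

theorem mulVec {ν₁ ν₂ : Type*} (h : MomentIntegrable x y) (P : Matrix ν₁ ι ℝ)
    (R : Matrix ν₂ κ ℝ) :
    MomentIntegrable (fun ω => P *ᵥ x ω) (fun ω => R *ᵥ y ω) := fun a b => by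
  simpa only [Matrix.mulVec, dotProduct, Finset.sum_mul_sum, mul_mul_mul_comm] using
    h.integrable_bilinear fun i j => P a i * R b j

theorem crossMoment_mulVec {ν₁ ν₂ : Type*} (h : MomentIntegrable x y) (P : Matrix ν₁ ι ℝ)
    (R : Matrix ν₂ κ ℝ) :
    crossMoment (fun ω => P *ᵥ x ω) (fun ω => R *ᵥ y ω) = P * crossMoment x y * Rᵀ := by
  ext a b
  have hprod : ∀ ω, (P *ᵥ x ω) a * (R *ᵥ y ω) b =
      ∑ i, ∑ j, P a i * R b j * (x ω i * y ω j) := fun ω => by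
    simp only [Matrix.mulVec, dotProduct, Finset.sum_mul_sum, mul_mul_mul_comm]
  rw [crossMoment, of_apply]
  simp_rw [hprod, h.integral_bilinear]
  simp only [Matrix.mul_apply, transpose_apply, Finset.sum_mul]
  rw [Finset.sum_comm]
  exact Finset.sum_congr rfl fun j _ => Finset.sum_congr rfl fun i _ => by ring

theorem trace_crossMoment_mul_le {u : Ω → ι → ℝ} {v : Ω → κ → ℝ}
    (hu : MomentIntegrable u u) (hv : MomentIntegrable v v)
    {Z : Matrix ι ι ℝ} {Y : Matrix κ κ ℝ}
    (h : ∀ᵐ ω, u ω ⬝ᵥ (Z *ᵥ u ω) ≤ v ω ⬝ᵥ (Y *ᵥ v ω)) :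
    (crossMoment u u * Z).trace ≤ (crossMoment v v * Y).trace := by
  rw [← hu.integral_dotProduct_mulVec, ← hv.integral_dotProduct_mulVec]
  exact integral_mono_ae (hu.integrable_dotProduct_mulVec Z) (hv.integrable_dotProduct_mulVec Y) h

end MomentIntegrable

end Moments

theorem dotProduct_mulVec_le_of_lmi {k n m : Type*} [Fintype k] [Fintype n] [Fintype m]
    {A : Matrix k n ℝ} {Bp : Matrix k m ℝ} {M : Matrix (n ⊕ m) (n ⊕ m) ℝ}
    {Z Y : Matrix k k ℝ} {ξ : ℝ} (hξ : 0 ≤ ξ)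
    (hLMI : (Matrix.fromBlocks (Aᵀ * (Z - Y) * A) (Aᵀ * Z * Bp)
        (Bpᵀ * Z * A) (Bpᵀ * Z * Bp) + ξ • M).NegSemidef')
    (x : n → ℝ) (p : m → ℝ) (hQC : 0 ≤ Sum.elim x p ⬝ᵥ (M *ᵥ Sum.elim x p)) :
    (A *ᵥ x + Bp *ᵥ p) ⬝ᵥ (Z *ᵥ (A *ᵥ x + Bp *ᵥ p)) ≤ (A *ᵥ x) ⬝ᵥ (Y *ᵥ (A *ᵥ x)) := by
  have hneg := hLMI.dotProduct_mulVec_nonneg (Sum.elim x p)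
  have hform : Sum.elim x p ⬝ᵥ (Matrix.fromBlocks (Aᵀ * (Z - Y) * A) (Aᵀ * Z * Bp)
      (Bpᵀ * Z * A) (Bpᵀ * Z * Bp) *ᵥ Sum.elim x p) =
      (A *ᵥ x + Bp *ᵥ p) ⬝ᵥ (Z *ᵥ (A *ᵥ x + Bp *ᵥ p)) - (A *ᵥ x) ⬝ᵥ (Y *ᵥ (A *ᵥ x)) := by
    simp only [fromBlocks_mulVec, sumElim_dotProduct_sumElim, Sum.elim_comp_inl,
      Sum.elim_comp_inr, sub_mulVec, dotProduct_sub, ← mulVec_mulVec, dotProduct_transpose_mulVec,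
      mulVec_add, dotProduct_add, add_dotProduct, dotProduct_comm _ (A *ᵥ x),
      dotProduct_comm _ (Bp *ᵥ p)]
    ring
  simp only [star_trivial, neg_mulVec, dotProduct_neg, add_mulVec, dotProduct_add, smul_mulVec,
    dotProduct_smul, hform, smul_eq_mul] at hneg
  linarith [mul_nonneg hξ hQC]

theorem stmt_5_general {Ω : Type*} [MeasureSpace Ω]
    (n m nw : ℕ)
    (δx : Ω → Fin n → ℝ) (p : Ω → Fin m → ℝ) (w : Ω → Fin nw → ℝ)
    (hxx : ∀ i j, Integrable fun ω => δx ω i * δx ω j)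
    (hpp : ∀ i j, Integrable fun ω => p ω i * p ω j)
    (hww : ∀ i j, Integrable fun ω => w ω i * w ω j)
    (hxp : ∀ i j, Integrable fun ω => δx ω i * p ω j)
    (hxw : ∀ i j, Integrable fun ω => δx ω i * w ω j)
    (hpw : ∀ i j, Integrable fun ω => p ω i * w ω j)
    (huncorr_wx : secondMoment w δx = 0)
    (huncorr_wp : secondMoment w p = 0)
    (Q : Matrix (Fin nw) (Fin nw) ℝ) (hQ : secondMoment w w = Q)
    (A : Matrix (Fin n) (Fin n) ℝ)
    (Bp : Matrix (Fin n) (Fin m) ℝ) (Bw : Matrix (Fin n) (Fin nw) ℝ)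
    (M : Matrix (Fin n ⊕ Fin m) (Fin n ⊕ Fin m) ℝ)
    (hQC : ∀ᵐ ω ∂(volume : Measure Ω),
      0 ≤ Sum.elim (δx ω) (p ω) ⬝ᵥ (M *ᵥ Sum.elim (δx ω) (p ω)))
    (δx' : Ω → Fin n → ℝ)
    (hδx' : ∀ ω, δx' ω = A *ᵥ δx ω + Bp *ᵥ p ω + Bw *ᵥ w ω)
    (Z Y : Matrix (Fin n) (Fin n) ℝ)
    (ξ : ℝ) (hξ : 0 ≤ ξ)
    (hLMI : (Matrix.fromBlocks (Aᵀ * (Z - Y) * A) (Aᵀ * Z * Bp)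
        (Bpᵀ * Z * A) (Bpᵀ * Z * Bp) + ξ • M).NegSemidef') :
    (secondMoment δx' δx' * Z).trace ≤
      (Bw * Q * Bwᵀ * Z).trace + (A * secondMoment δx δx * Aᵀ * Y).trace := by
  set S := fun ω => Sum.elim (δx ω) (p ω)
  set G := fromCols A Bp
  have hSS : MomentIntegrable S S :=
    (MomentIntegrable.sumElim_right hxx hxp).sumElim_left
      (MomentIntegrable.symm hxp |>.sumElim_right hpp)
  have hSw : MomentIntegrable S w := MomentIntegrable.sumElim_left hxw hpw
  have hV : MomentIntegrable (fun ω => Sum.elim (S ω) (w ω)) (fun ω => Sum.elim (S ω) (w ω)) :=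
    (hSS.sumElim_right hSw).sumElim_left (hSw.symm.sumElim_right hww)
  have hδx'_eq : δx' = fun ω => fromCols G Bw *ᵥ Sum.elim (S ω) (w ω) := by
    funext ω
    rw [hδx', fromCols_mulVec_sumElim, fromCols_mulVec_sumElim]
  have hwS : crossMoment w S = 0 := by
    ext i (j | j)
    exacts [congrFun₂ huncorr_wx i j, congrFun₂ huncorr_wp i j]
  have hsplit : secondMoment δx' δx' =
      crossMoment (fun ω => G *ᵥ S ω) (fun ω => G *ᵥ S ω) + Bw * Q * Bwᵀ := by
    rw [hδx'_eq, secondMoment_eq_crossMoment, hV.crossMoment_mulVec, crossMoment_sumElim,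
      ← crossMoment_transpose w S, hwS, ← secondMoment_eq_crossMoment w w, hQ,
      hSS.crossMoment_mulVec, transpose_fromCols, fromCols_mul_fromBlocks,
      fromCols_mul_fromRows]
    simp
  have hpointwise : ∀ᵐ ω, (G *ᵥ S ω) ⬝ᵥ (Z *ᵥ (G *ᵥ S ω)) ≤ (A *ᵥ δx ω) ⬝ᵥ (Y *ᵥ (A *ᵥ δx ω)) :=
    hQC.mono fun ω hω => by
      simpa only [G, S, fromCols_mulVec_sumElim] using
        dotProduct_mulVec_le_of_lmi hξ hLMI (δx ω) (p ω) hω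
  rw [hsplit, add_mul, trace_add, add_comm, secondMoment_eq_crossMoment,
    ← MomentIntegrable.crossMoment_mulVec hxx A A]
  gcongr
  exact (hSS.mulVec G G).trace_crossMoment_mul_le (MomentIntegrable.mulVec hxx A A) hpointwise

/-- Theorem 1 of the paper: if `Z − Y ⪯ 0` and the block LMI holds,
then `tr(P⁻_{k+1} Z) ≤ tr(B_w Q B_wᵀ Z) + tr(A P⁺_k Aᵀ Y)`. -/
theorem stmt_5 {Ω : Type*} [MeasureSpace Ω] [IsProbabilityMeasure (volume : Measure Ω)]
    (n m nw : ℕ)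
    (δx : Ω → Fin n → ℝ) (p : Ω → Fin m → ℝ) (w : Ω → Fin nw → ℝ)
    (hxx : ∀ i j, Integrable fun ω => δx ω i * δx ω j)
    (hpp : ∀ i j, Integrable fun ω => p ω i * p ω j)
    (hww : ∀ i j, Integrable fun ω => w ω i * w ω j)
    (hxp : ∀ i j, Integrable fun ω => δx ω i * p ω j)
    (hxw : ∀ i j, Integrable fun ω => δx ω i * w ω j)
    (hpw : ∀ i j, Integrable fun ω => p ω i * w ω j)
    (hwmean : ∀ i, ∫ ω, w ω i = 0)
    (huncorr_wx : secondMoment w δx = 0)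
    (huncorr_wp : secondMoment w p = 0)
    (Q : Matrix (Fin nw) (Fin nw) ℝ) (hQ : secondMoment w w = Q)
    (A : Matrix (Fin n) (Fin n) ℝ)
    (Bp : Matrix (Fin n) (Fin m) ℝ) (Bw : Matrix (Fin n) (Fin nw) ℝ)
    (M : Matrix (Fin n ⊕ Fin m) (Fin n ⊕ Fin m) ℝ) (hM : M.IsSymm)
    (hQC : ∀ᵐ ω ∂(volume : Measure Ω),
      0 ≤ Sum.elim (δx ω) (p ω) ⬝ᵥ (M *ᵥ Sum.elim (δx ω) (p ω)))
    (δx' : Ω → Fin n → ℝ)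
    (hδx' : ∀ ω, δx' ω = A *ᵥ δx ω + Bp *ᵥ p ω + Bw *ᵥ w ω)
    (Z Y : Matrix (Fin n) (Fin n) ℝ) (hZsym : Z.IsSymm) (hYsym : Y.IsSymm)
    (ξ : ℝ) (hξ : 0 ≤ ξ)
    (hZY : (Z - Y).NegSemidef')
    (hLMI : (Matrix.fromBlocks (Aᵀ * (Z - Y) * A) (Aᵀ * Z * Bp)
        (Bpᵀ * Z * A) (Bpᵀ * Z * Bp) + ξ • M).NegSemidef') :
    (secondMoment δx' δx' * Z).trace ≤
      (Bw * Q * Bwᵀ * Z).trace + (A * secondMoment δx δx * Aᵀ * Y).trace :=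
  stmt_5_general n m nw δx p w hxx hpp hww hxp hxw hpw huncorr_wx huncorr_wp Q hQ A Bp Bw M hQC δx'
    hδx' Z Y ξ hξ hLMI
end

section
/- Let x ∈ ℝⁿ, ρ ∈ ℝᵐ, v ∈ ℝᵖ, and matrices H ∈ ℝ^{q×n}, K ∈ ℝ^{n×q}, B_ρ ∈ ℝ^{q×m}, B_v ∈ ℝ^{q×p}, Z, Y ∈ S^n, ξ ≥ 0, M ∈ S^{n+m}. Suppose [[−Y, HᵀKᵀZKB_ρ − ZKB_ρ],[ (HᵀKᵀZKB_ρ − ZKB_ρ)ᵀ, B_ρᵀKᵀZKB_ρ]] + ξ M ⪯ 0 and [x; ρ]ᵀ M [x; ρ] ≥ 0. Let e = x − K(H x + B_ρ ρ + B_v v). Then eᵀ Z e ≤ xᵀ (I − KH)ᵀ Z (I − KH) x + xᵀ Y x + (cross and quadratic terms in v): eᵀ Z e ≤ xᵀ(I−KH)ᵀZ(I−KH)x + xᵀYx − 2 xᵀ(I−KH)ᵀ Z K B_v v + 2 ρᵀ B_ρᵀ Kᵀ Z K B_v v + vᵀ B_vᵀ Kᵀ Z K B_v v. -/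
open Matrix

namespace Matrix

section

variable {R : Type*} [CommRing R] {k l k' l' : Type*} [Fintype k] [Fintype l]

lemma dotProduct_transpose_mul_mul_mulVec [Fintype k'] [Fintype l'] (A : Matrix l k R)
    (Z : Matrix l l' R) (B : Matrix l' k' R) (u : k → R) (w : k' → R) :
    u ⬝ᵥ ((Aᵀ * Z * B) *ᵥ w) = (A *ᵥ u) ⬝ᵥ (Z *ᵥ (B *ᵥ w)) := by
  rw [← mulVec_mulVec, ← mulVec_mulVec, mulVec_transpose, dotProduct_comm, ← dotProduct_mulVec,
    dotProduct_comm]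

lemma IsSymm.dotProduct_mulVec_comm {Z : Matrix l l R} (hZ : Z.IsSymm) (u w : l → R) :
    u ⬝ᵥ (Z *ᵥ w) = w ⬝ᵥ (Z *ᵥ u) := by
  rw [dotProduct_comm, dotProduct_mulVec, ← vecMul_transpose, hZ.eq]

lemma sumElim_dotProduct_fromBlocks_mulVec (A : Matrix k k R) (B : Matrix k l R)
    (D : Matrix l l R) (x : k → R) (ρ : l → R) :
    Sum.elim x ρ ⬝ᵥ (fromBlocks A B Bᵀ D *ᵥ Sum.elim x ρ) =
      x ⬝ᵥ (A *ᵥ x) + 2 * (x ⬝ᵥ (B *ᵥ ρ)) + ρ ⬝ᵥ (D *ᵥ ρ) := by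
  rw [fromBlocks_mulVec, dotProduct_block]
  simp only [Sum.elim_comp_inl, Sum.elim_comp_inr, dotProduct_add, mulVec_transpose]
  rw [dotProduct_comm ρ, ← dotProduct_mulVec]
  ring

end

lemma NegSemidef'.dotProduct_mulVec_nonpos_of_add_smul {k : Type*} [Fintype k]
    {N M : Matrix k k ℝ} {ξ : ℝ} (h : (N + ξ • M).NegSemidef') (hξ : 0 ≤ ξ) {z : k → ℝ}
    (hz : 0 ≤ z ⬝ᵥ (M *ᵥ z)) : z ⬝ᵥ (N *ᵥ z) ≤ 0 := by
  have := h.dotProduct_mulVec_nonneg z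
  simp only [star_trivial, neg_mulVec, add_mulVec, smul_mulVec, dotProduct_neg, dotProduct_add,
    dotProduct_smul, smul_eq_mul] at this
  nlinarith [mul_nonneg hξ hz]

end Matrix

theorem stmt_7_general (n m p q : ℕ)
    (x : Fin n → ℝ) (ρ : Fin m → ℝ) (v : Fin p → ℝ)
    (H : Matrix (Fin q) (Fin n) ℝ) (K : Matrix (Fin n) (Fin q) ℝ)
    (Bρ : Matrix (Fin q) (Fin m) ℝ) (Bv : Matrix (Fin q) (Fin p) ℝ)
    (Z Y : Matrix (Fin n) (Fin n) ℝ) (hZ : Z.IsSymm)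
    (ξ : ℝ) (hξ : 0 ≤ ξ)
    (M : Matrix (Fin n ⊕ Fin m) (Fin n ⊕ Fin m) ℝ)
    (hLMI : (Matrix.fromBlocks (-Y) (Hᵀ * Kᵀ * Z * K * Bρ - Z * K * Bρ)
        (Hᵀ * Kᵀ * Z * K * Bρ - Z * K * Bρ)ᵀ (Bρᵀ * Kᵀ * Z * K * Bρ)
        + ξ • M).NegSemidef')
    (hQC : 0 ≤ Sum.elim x ρ ⬝ᵥ (M *ᵥ Sum.elim x ρ)) :
    (x - K *ᵥ (H *ᵥ x + Bρ *ᵥ ρ + Bv *ᵥ v)) ⬝ᵥ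
        (Z *ᵥ (x - K *ᵥ (H *ᵥ x + Bρ *ᵥ ρ + Bv *ᵥ v))) ≤
      x ⬝ᵥ (((1 - K * H)ᵀ * Z * (1 - K * H)) *ᵥ x) + x ⬝ᵥ (Y *ᵥ x) -
        2 * (x ⬝ᵥ (((1 - K * H)ᵀ * Z * K * Bv) *ᵥ v)) +
        2 * (ρ ⬝ᵥ ((Bρᵀ * Kᵀ * Z * K * Bv) *ᵥ v)) +
        v ⬝ᵥ ((Bvᵀ * Kᵀ * Z * K * Bv) *ᵥ v) := by
  have hLMIblock : Hᵀ * Kᵀ * Z * K * Bρ - Z * K * Bρ = -((1 - K * H)ᵀ * Z * (K * Bρ)) := by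
    simp only [transpose_sub, transpose_one, transpose_mul, Matrix.sub_mul, Matrix.one_mul,
      Matrix.mul_assoc, neg_sub]
  have hS := hLMI.dotProduct_mulVec_nonpos_of_add_smul hξ hQC
  rw [sumElim_dotProduct_fromBlocks_mulVec, hLMIblock] at hS
  simp only [Matrix.mul_assoc _ K, ← transpose_mul, neg_mulVec, dotProduct_neg,
    dotProduct_transpose_mul_mul_mulVec] at hS
  have he : x - K *ᵥ (H *ᵥ x + Bρ *ᵥ ρ + Bv *ᵥ v) =
      (1 - K * H) *ᵥ x - (K * Bρ) *ᵥ ρ - (K * Bv) *ᵥ v := by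
    simp only [sub_mulVec, one_mulVec, mulVec_add, mulVec_mulVec]
    abel
  rw [he]
  simp only [Matrix.mul_assoc _ K, ← transpose_mul, dotProduct_transpose_mul_mul_mulVec]
  set a := (1 - K * H) *ᵥ x
  set b := (K * Bρ) *ᵥ ρ
  set c := (K * Bv) *ᵥ v
  simp only [mulVec_sub, sub_dotProduct, dotProduct_sub]
  linarith [hZ.dotProduct_mulVec_comm a b, hZ.dotProduct_mulVec_comm a c,
    hZ.dotProduct_mulVec_comm b c]

/-- deterministic pointwise inequality underlying Theorem 2. -/
theorem stmt_7 (n m p q : ℕ)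
    (x : Fin n → ℝ) (ρ : Fin m → ℝ) (v : Fin p → ℝ)
    (H : Matrix (Fin q) (Fin n) ℝ) (K : Matrix (Fin n) (Fin q) ℝ)
    (Bρ : Matrix (Fin q) (Fin m) ℝ) (Bv : Matrix (Fin q) (Fin p) ℝ)
    (Z Y : Matrix (Fin n) (Fin n) ℝ) (hZ : Z.IsSymm) (hY : Y.IsSymm)
    (ξ : ℝ) (hξ : 0 ≤ ξ)
    (M : Matrix (Fin n ⊕ Fin m) (Fin n ⊕ Fin m) ℝ) (hM : M.IsSymm)
    (hLMI : (Matrix.fromBlocks (-Y) (Hᵀ * Kᵀ * Z * K * Bρ - Z * K * Bρ)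
        (Hᵀ * Kᵀ * Z * K * Bρ - Z * K * Bρ)ᵀ (Bρᵀ * Kᵀ * Z * K * Bρ)
        + ξ • M).NegSemidef')
    (hQC : 0 ≤ Sum.elim x ρ ⬝ᵥ (M *ᵥ Sum.elim x ρ)) :
    (x - K *ᵥ (H *ᵥ x + Bρ *ᵥ ρ + Bv *ᵥ v)) ⬝ᵥ
        (Z *ᵥ (x - K *ᵥ (H *ᵥ x + Bρ *ᵥ ρ + Bv *ᵥ v))) ≤
      x ⬝ᵥ (((1 - K * H)ᵀ * Z * (1 - K * H)) *ᵥ x) + x ⬝ᵥ (Y *ᵥ x) -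
        2 * (x ⬝ᵥ (((1 - K * H)ᵀ * Z * K * Bv) *ᵥ v)) +
        2 * (ρ ⬝ᵥ ((Bρᵀ * Kᵀ * Z * K * Bv) *ᵥ v)) +
        v ⬝ᵥ ((Bvᵀ * Kᵀ * Z * K * Bv) *ᵥ v) :=
  stmt_7_general n m p q x ρ v H K Bρ Bv Z Y hZ ξ hξ M hLMI hQC
end
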